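/- arXiv:1707.09332 — 8 statements merged into one kernel-verified Lean document; each statement's English description precedes it below -/
import Mathlib

section
/- Let k be a field and let P₁, P₂ be 3×4 matrices over k, each of rank 3, such that the kernels of the induced linear maps k⁴ → k³ are distinct subspaces of k⁴. Then there exists a nonzero 3×3 matrix A over k such that for every vector ξ ∈ k⁴ one has (P₁ *ᵥ ξ) ⬝ᵥ (A *ᵥ (P₂ *ᵥ ξ)) = 0. -/
/-!
Let `c` span the center of the second camera and let `e = P₁ c` be its image under the first
camera (the epipole), which is nonzero because the centers differ. The linear map
`ξ ↦ e × P₁ ξ` vanishes on `ker P₂ = k ∙ c`, so it factors through the surjection `P₂` as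
`ξ ↦ F (P₂ ξ)`. Then `P₁ ξ ⬝ F (P₂ ξ) = P₁ ξ ⬝ (e × P₁ ξ) = 0`, and `F ≠ 0` because `P₁` is
surjective and `e × ·` vanishes only for `e = 0`.
-/

open Matrix Module LinearMap

theorem crossProduct_eq_zero_iff {R : Type*} [CommRing R] {v : Fin 3 → R} :
    crossProduct v = 0 ↔ v = 0 := by
  refine ⟨fun h => ?_, fun h => h ▸ map_zero _⟩
  have h₀ := LinearMap.congr_fun h ![1, 0, 0]
  have h₁ := LinearMap.congr_fun h ![0, 1, 0]
  simp only [cross_apply, LinearMap.zero_apply] at h₀ h₁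
  ext i
  fin_cases i <;> simp_all

theorem LinearMap.exists_comp_eq_of_surjective_of_ker_le {R M N P : Type*} [Ring R]
    [AddCommGroup M] [AddCommGroup N] [AddCommGroup P] [Module R M] [Module R N] [Module R P]
    [Module.Projective R N] {f : M →ₗ[R] N} {h : M →ₗ[R] P} (hf : Function.Surjective f)
    (hker : ker f ≤ ker h) : ∃ g : N →ₗ[R] P, g ∘ₗ f = h := by
  obtain ⟨s, hs⟩ := Module.projective_lifting_property f LinearMap.id hf
  refine ⟨h ∘ₗ s, LinearMap.ext fun x => ?_⟩
  have hx : x - s (f x) ∈ ker f := by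
    rw [mem_ker, map_sub, ← comp_apply f s, hs, id_apply, sub_self]
  exact (sub_eq_zero.1 (by simpa using hker hx)).symm

theorem Submodule.exists_mem_notMem_of_ne_of_finrank_eq {K V : Type*} [Field K]
    [AddCommGroup V] [Module K V] [FiniteDimensional K V] {S T : Submodule K V} (hST : S ≠ T)
    (h : finrank K S = finrank K T) : ∃ c ∈ T, c ∉ S := by
  by_contra! hTS
  exact hST (eq_of_le_of_finrank_eq hTS h.symm).symm

namespace Matrix

variable {K : Type*} [Field K]

theorem rank_add_finrank_ker_mulVecLin {m n : Type*} [Fintype n] (A : Matrix m n K) :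
    A.rank + finrank K (ker A.mulVecLin) = Fintype.card n := by
  rw [Matrix.rank, finrank_range_add_finrank_ker, finrank_fintype_fun_eq_card]

theorem mulVecLin_surjective_of_rank_eq {m n : Type*} [Fintype m] [Fintype n]
    {A : Matrix m n K} (h : A.rank = Fintype.card m) : Function.Surjective A.mulVecLin :=
  range_eq_top.1 (Submodule.eq_top_of_finrank_eq (h.trans (finrank_fintype_fun_eq_card K).symm))

theorem finrank_ker_mulVecLin_eq_one {m : ℕ} {A : Matrix (Fin m) (Fin (m + 1)) K}
    (h : A.rank = m) : finrank K (ker A.mulVecLin) = 1 := by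
  have := A.rank_add_finrank_ker_mulVecLin
  rw [h, Fintype.card_fin] at this
  omega

end Matrix

/-- Two cameras with distinct centers admit a fundamental matrix:
a nonzero 3×3 bilinear form vanishing on all point correspondences. -/
theorem fundamental_matrix_exists {k : Type*} [Field k]
    (P₁ P₂ : Matrix (Fin 3) (Fin 4) k)
    (hP₁ : P₁.rank = 3) (hP₂ : P₂.rank = 3)
    (hker : LinearMap.ker P₁.mulVecLin ≠ LinearMap.ker P₂.mulVecLin) :
    ∃ A : Matrix (Fin 3) (Fin 3) k, A ≠ 0 ∧
      ∀ ξ : Fin 4 → k, (P₁ *ᵥ ξ) ⬝ᵥ (A *ᵥ (P₂ *ᵥ ξ)) = 0 := by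
  have hdim₂ := finrank_ker_mulVecLin_eq_one hP₂
  obtain ⟨c, hc₂, hc₁⟩ := Submodule.exists_mem_notMem_of_ne_of_finrank_eq hker
    ((finrank_ker_mulVecLin_eq_one hP₁).trans hdim₂.symm)
  have hcenter : ker P₂.mulVecLin = k ∙ c :=
    eq_span_singleton_of_mem_of_finrank_eq_one hdim₂ hc₂ fun h => hc₁ (h ▸ zero_mem _)
  set e := P₁ *ᵥ c
  have he : e ≠ 0 := hc₁
  have hker_le : ker P₂.mulVecLin ≤ ker (crossProduct e ∘ₗ P₁.mulVecLin) := by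
    rw [hcenter, Submodule.span_singleton_le_iff_mem]
    exact cross_self e
  obtain ⟨F, hF⟩ := exists_comp_eq_of_surjective_of_ker_le
    (mulVecLin_surjective_of_rank_eq (hP₂.trans (Fintype.card_fin 3).symm)) hker_le
  refine ⟨toMatrix' F, fun hA => he ?_, fun ξ => ?_⟩
  · rw [LinearEquiv.map_eq_zero_iff] at hA
    rw [← crossProduct_eq_zero_iff,
      ← cancel_right (mulVecLin_surjective_of_rank_eq (hP₁.trans (Fintype.card_fin 3).symm)), ← hF,
      hA, zero_comp, zero_comp]
  · have hFξ : F (P₂ *ᵥ ξ) = e ⨯₃ (P₁ *ᵥ ξ) := LinearMap.congr_fun hF ξ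
    rw [toMatrix'_mulVec, hFξ, dot_cross_self]
end

section
/- Let k be a field, let P₁, P₂ be 3×4 matrices over k with P₁ of rank 3 (so the induced map k⁴ → k³ is surjective), and let A be a 3×3 matrix over k such that (P₁ *ᵥ ξ) ⬝ᵥ (A *ᵥ (P₂ *ᵥ ξ)) = 0 for every ξ ∈ k⁴. Then for every vector o ∈ k⁴ with P₁ *ᵥ o = 0 one has A *ᵥ (P₂ *ᵥ o) = 0. -/
open Matrix

/-- The image under the second camera of the center of the first camera
lies in the right kernel of the fundamental matrix. -/
theorem epipole_in_right_kernel {k : Type*} [Field k]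
    (P₁ P₂ : Matrix (Fin 3) (Fin 4) k)
    (hP₁ : P₁.rank = 3)
    (A : Matrix (Fin 3) (Fin 3) k)
    (hA : ∀ ξ : Fin 4 → k, (P₁ *ᵥ ξ) ⬝ᵥ (A *ᵥ (P₂ *ᵥ ξ)) = 0) :
    ∀ o : Fin 4 → k, P₁ *ᵥ o = 0 → A *ᵥ (P₂ *ᵥ o) = 0 := by
  intro o ho
  -- surjectivity of P₁ *ᵥ ·
  have hsurj : Function.Surjective (P₁.mulVecLin) := by
    rw [← LinearMap.range_eq_top]
    apply Submodule.eq_top_of_finrank_eq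
    rw [← Matrix.rank, hP₁]
    simp [Module.finrank_pi]
  -- orthogonality to every vector
  have key : ∀ y : Fin 3 → k, y ⬝ᵥ (A *ᵥ (P₂ *ᵥ o)) = 0 := by
    intro y
    obtain ⟨ξ, hξ⟩ := hsurj y
    have h1 := hA (ξ + o)
    have h2 := hA ξ
    simp only [mulVec_add, ho, add_zero, dotProduct_add] at h1
    rw [h2, zero_add] at h1
    rwa [← hξ]
  funext i
  have := key (Pi.single i 1)
  simpa [dotProduct, Pi.single_apply] using this
end

section
/- Let k be an infinite field, let P₁, P₂ be 3×4 matrices over k, each of rank 3, whose kernels in k⁴ are distinct, and let A be a nonzero 3×3 matrix over k such that (P₁ *ᵥ ξ) ⬝ᵥ (A *ᵥ (P₂ *ᵥ ξ)) = 0 for every ξ ∈ k⁴. Then A has rank exactly 2. -/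
open Matrix

section FundamentalAux

variable {k : Type*} [Field k]

private lemma fund_rank_mul_right {l m n : Type*} [Fintype l] [Fintype m] [Fintype n]
    [DecidableEq m] [DecidableEq n]
    (B : Matrix l m k) (C : Matrix m n k)
    (hC : LinearMap.range C.mulVecLin = ⊤) : (B * C).rank = B.rank := by
  rw [Matrix.rank, Matrix.mulVecLin_mul, LinearMap.range_comp_of_range_eq_top _ hC, Matrix.rank]

private lemma fund_rank_mul_left {l m n : Type*} [Fintype l] [Fintype m] [Fintype n]
    [DecidableEq m] [DecidableEq n]
    (B : Matrix l m k) (C : Matrix m n k)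
    (hB : Function.Injective B.mulVecLin) : (B * C).rank = C.rank := by
  rw [Matrix.rank, Matrix.mulVecLin_mul, LinearMap.range_comp, Matrix.rank]
  exact (LinearEquiv.finrank_eq (Submodule.equivMapOfInjective _ hB _)).symm

private lemma fund_range_top (P : Matrix (Fin 3) (Fin 4) k) (h : P.rank = 3) :
    LinearMap.range P.mulVecLin = ⊤ := by
  apply Submodule.eq_top_of_finrank_eq
  rw [Module.finrank_fin_fun]; exact h

private lemma fund_inj_transpose (P : Matrix (Fin 3) (Fin 4) k) (h : P.rank = 3) :
    Function.Injective Pᵀ.mulVecLin := by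
  rw [← LinearMap.ker_eq_bot]
  have h1 : Pᵀ.rank = 3 := by rw [Matrix.rank_transpose]; exact h
  have h2 := LinearMap.finrank_range_add_finrank_ker Pᵀ.mulVecLin
  rw [Module.finrank_fin_fun,
    show Module.finrank k (LinearMap.range Pᵀ.mulVecLin) = 3 from h1] at h2
  exact Submodule.finrank_eq_zero.mp (by omega)

private lemma fund_inj_square (B : Matrix (Fin 3) (Fin 3) k) (h : B.rank = 3) :
    Function.Injective B.mulVecLin := by
  rw [← LinearMap.ker_eq_bot]
  have h2 := LinearMap.finrank_range_add_finrank_ker B.mulVecLin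
  rw [Module.finrank_fin_fun,
    show Module.finrank k (LinearMap.range B.mulVecLin) = 3 from h] at h2
  exact Submodule.finrank_eq_zero.mp (by omega)

private lemma fund_ker_mul {l m n : Type*} [Fintype l] [Fintype m] [Fintype n]
    [DecidableEq m] [DecidableEq n]
    (B : Matrix l m k) (C : Matrix m n k)
    (hB : Function.Injective B.mulVecLin) :
    LinearMap.ker (B * C).mulVecLin = LinearMap.ker C.mulVecLin := by
  rw [Matrix.mulVecLin_mul]
  exact LinearMap.ker_comp_of_ker_eq_bot _ (LinearMap.ker_eq_bot.mpr hB)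

private lemma fund_rank_ge_two (M : Matrix (Fin 4) (Fin 4) k) (i j : Fin 4)
    (hd : ∀ r, M r r = 0) (hne : M i j ≠ 0) (hsk : M j i = - M i j) :
    2 ≤ M.rank := by
  have hci : M.mulVecLin (Pi.single i 1) = fun r => M r i := by
    ext r; simp [Matrix.mulVecLin_apply]
  have hcj : M.mulVecLin (Pi.single j 1) = fun r => M r j := by
    ext r; simp [Matrix.mulVecLin_apply]
  have hli : LinearIndependent k ![(fun r => M r i : Fin 4 → k), fun r => M r j] := by
    rw [LinearIndependent.pair_iff]
    intro s t hst
    have h1 := congrFun hst i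
    have h2 := congrFun hst j
    simp [hd, hsk] at h1 h2
    constructor
    · rcases h2 with h | h; · exact h
      exact absurd h hne
    · rcases h1 with h | h; · exact h
      exact absurd h hne
  have hsp : Submodule.span k (Set.range ![(fun r => M r i : Fin 4 → k), fun r => M r j])
      ≤ LinearMap.range M.mulVecLin := by
    rw [Submodule.span_le]
    rintro x ⟨r, rfl⟩
    fin_cases r
    · exact ⟨Pi.single i 1, hci⟩
    · exact ⟨Pi.single j 1, hcj⟩
  calc 2 = Module.finrank k (Submodule.span k
        (Set.range ![(fun r => M r i : Fin 4 → k), fun r => M r j])) := by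
        rw [finrank_span_eq_card hli]; simp
    _ ≤ M.rank := Submodule.finrank_mono hsp

end FundamentalAux

/-- A nonzero fundamental matrix of a pair of cameras with distinct centers
has rank exactly 2. -/
theorem fundamental_matrix_rank_two {k : Type*} [Field k] [Infinite k]
    (P₁ P₂ : Matrix (Fin 3) (Fin 4) k)
    (hP₁ : P₁.rank = 3) (hP₂ : P₂.rank = 3)
    (hker : LinearMap.ker P₁.mulVecLin ≠ LinearMap.ker P₂.mulVecLin)
    (A : Matrix (Fin 3) (Fin 3) k) (hA : A ≠ 0)
    (hvan : ∀ ξ : Fin 4 → k, (P₁ *ᵥ ξ) ⬝ᵥ (A *ᵥ (P₂ *ᵥ ξ)) = 0) :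
    A.rank = 2 := by
  set M : Matrix (Fin 4) (Fin 4) k := P₁ᵀ * (A * P₂) with hM
  -- the quadratic form of M vanishes identically
  have h0 : ∀ ξ, ξ ⬝ᵥ (M *ᵥ ξ) = 0 := by
    intro ξ
    simpa [hM, ← mulVec_mulVec, dotProduct_mulVec, vecMul_transpose] using hvan ξ
  -- M has zero diagonal and is skew-symmetric
  have hd : ∀ r, M r r = 0 := fun r => by simpa using h0 (Pi.single r 1)
  have hsk : ∀ i j, M j i = - M i j := by
    intro i j
    have hij2 := h0 (Pi.single i 1 + Pi.single j 1)
    simp [dotProduct_add, add_dotProduct, mulVec_add, hd] at hij2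
    linear_combination hij2
  -- basic injectivity/surjectivity facts
  have hP₁inj := fund_inj_transpose P₁ hP₁
  have hP₂inj := fund_inj_transpose P₂ hP₂
  have hP₂surj := fund_range_top P₂ hP₂
  have hP₁surj := fund_range_top P₁ hP₁
  -- rank M = rank A
  have hrankAP₂ : (A * P₂).rank = A.rank := fund_rank_mul_right A P₂ hP₂surj
  have hrankM : M.rank = A.rank := by
    rw [hM, fund_rank_mul_left _ _ hP₁inj, hrankAP₂]
  -- A is nonzero, hence M is nonzero
  have hMne : M ≠ 0 := by
    intro h
    apply hA
    have hv : ∀ v : Fin 3 → k, A *ᵥ v = 0 := by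
      intro v
      obtain ⟨ξ, hξ⟩ := LinearMap.range_eq_top.mp hP₂surj v
      have hz : M *ᵥ ξ = 0 := by rw [h]; simp
      rw [hM, ← mulVec_mulVec, ← mulVec_mulVec] at hz
      have hξ' : P₂ *ᵥ ξ = v := hξ
      rw [hξ'] at hz
      exact hP₁inj (a₁ := A *ᵥ v) (a₂ := 0)
        (by rw [Matrix.mulVecLin_apply, Matrix.mulVecLin_apply, Matrix.mulVec_zero]; exact hz)
    ext r c
    have := congrFun (hv (Pi.single c 1)) r
    simpa using this
  obtain ⟨i, j, hne⟩ : ∃ i j, M i j ≠ 0 := by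
    by_contra h
    push_neg at h
    exact hMne (by ext i j; simpa using h i j)
  -- lower bound
  have hlow : 2 ≤ A.rank := by
    rw [← hrankM]
    exact fund_rank_ge_two M i j hd hne (hsk i j)
  -- upper bound: rank A ≤ 3, and rank A = 3 is impossible
  have hup : A.rank ≤ 3 := by
    simpa using A.rank_le_card_width
  have hne3 : A.rank ≠ 3 := by
    intro h3
    apply hker
    have hAinj := fund_inj_square A h3
    have hATinj : Function.Injective Aᵀ.mulVecLin :=
      fund_inj_square Aᵀ (by rw [Matrix.rank_transpose]; exact h3)
    -- ker M = ker P₂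
    have hkM : LinearMap.ker M.mulVecLin = LinearMap.ker P₂.mulVecLin := by
      rw [hM, fund_ker_mul _ _ hP₁inj, Matrix.mulVecLin_mul]
      exact LinearMap.ker_comp_of_ker_eq_bot _ (LinearMap.ker_eq_bot.mpr hAinj)
    -- ker Mᵀ = ker P₁, and Mᵀ = -M
    have hMT : Mᵀ = P₂ᵀ * (Aᵀ * P₁) := by
      rw [hM]
      rw [Matrix.transpose_mul, Matrix.transpose_mul, Matrix.transpose_transpose, Matrix.mul_assoc]
    have hkMT : LinearMap.ker Mᵀ.mulVecLin = LinearMap.ker P₁.mulVecLin := by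
      rw [hMT, fund_ker_mul _ _ hP₂inj, Matrix.mulVecLin_mul]
      exact LinearMap.ker_comp_of_ker_eq_bot _ (LinearMap.ker_eq_bot.mpr hATinj)
    have hMTneg : Mᵀ = -M := by
      ext a b
      simp [Matrix.transpose_apply, hsk b a]
    have hkneg : LinearMap.ker Mᵀ.mulVecLin = LinearMap.ker M.mulVecLin := by
      rw [hMTneg]
      ext x
      simp [Matrix.mulVecLin_apply, Matrix.neg_mulVec, neg_eq_zero]
    rw [← hkMT, hkneg, hkM]
  omega
end

section
/- Let k be a field and let A be a 3×3 matrix over k of rank exactly 2. Then there exist 3×4 matrices P₁, P₂ over k, each of rank 3, whose kernels in k⁴ are distinct, such that (P₁ *ᵥ ξ) ⬝ᵥ (A *ᵥ (P₂ *ᵥ ξ)) = 0 for every ξ ∈ k⁴. -/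
/-!
Let `v ≠ 0` be a left kernel vector of `A` (`v ᵥ* A = 0`) and choose `e` with `v ⬝ᵥ e ≠ 0`
(the textbook choice `e = v` fails over fields where `v ⬝ᵥ v` can vanish). Take the cameras
`P₂ = [I | 0]` and `P₁ = [[e]ₓ A | v]`, where `[e]ₓ` is the matrix of `u ↦ e ⨯₃ u`.
Writing `ξ = (x, t)`, the form `(P₁ ξ) ⬝ᵥ A (P₂ ξ) = (e ⨯₃ A x) ⬝ᵥ A x + t (v ⬝ᵥ A x)` vanishes.
The last basis vector spans the centre of `P₂` but `P₁` sends it to `v ≠ 0`.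
Since `v` annihilates the column space of `A`, `e` lies outside it; as the kernel of `[e]ₓ` is
the line through `e`, `[e]ₓ A` still has rank `2`. Its columns are orthogonal to `e` while `v`
is not, so appending `v` raises the rank to `3`.
-/

open Matrix

theorem disjoint_ker_crossProduct {k : Type*} [Field k] {W : Submodule k (Fin 3 → k)}
    {e : Fin 3 → k} (he : e ∉ W) : Disjoint W (LinearMap.ker (crossProduct e)) := by
  rw [Submodule.disjoint_def]
  intro u hu hcross
  by_contra hu0
  obtain ⟨a, rfl⟩ : ∃ a : k, a • u = e := by
    have := crossProduct_ne_zero_iff_linearIndependent.not.mp (not_not.mpr hcross)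
    simpa [linearIndependent_fin2, hu0] using this
  exact he (W.smul_mem a hu)

namespace Matrix

variable {R : Type*} {m : Type*} {n : ℕ}

def snocCol (M : Matrix m (Fin n) R) (v : m → R) : Matrix m (Fin (n + 1)) R :=
  of fun i => Fin.snoc (M i) (v i)

section CommSemiring

variable [CommSemiring R]

theorem snocCol_mulVec (M : Matrix m (Fin n) R) (v : m → R) (ξ : Fin (n + 1) → R) :
    snocCol M v *ᵥ ξ = M *ᵥ Fin.init ξ + ξ (Fin.last n) • v := by
  ext i
  simp [snocCol, mulVec, dotProduct, Fin.sum_univ_castSucc, Fin.init, mul_comm]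

theorem snocCol_mulVec_single_last (M : Matrix m (Fin n) R) (v : m → R) :
    snocCol M v *ᵥ Pi.single (Fin.last n) 1 = v := by
  ext i
  simp [snocCol]

theorem range_snocCol_mulVecLin (M : Matrix m (Fin n) R) (v : m → R) :
    LinearMap.range (snocCol M v).mulVecLin =
      LinearMap.range M.mulVecLin ⊔ Submodule.span R {v} := by
  ext w
  simp only [LinearMap.mem_range, mulVecLin_apply, Submodule.mem_sup,
    Submodule.mem_span_singleton]
  constructor
  · rintro ⟨ξ, rfl⟩
    exact ⟨_, ⟨Fin.init ξ, rfl⟩, _, ⟨ξ (Fin.last n), rfl⟩, (snocCol_mulVec M v ξ).symm⟩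
  · rintro ⟨_, ⟨x, rfl⟩, _, ⟨t, rfl⟩, rfl⟩
    exact ⟨Fin.snoc x t, by simp [snocCol_mulVec]⟩

theorem ker_snocCol_mulVecLin_ne {M N : Matrix m (Fin n) R} {v : m → R} (hv : v ≠ 0) :
    LinearMap.ker (snocCol M v).mulVecLin ≠ LinearMap.ker (snocCol N 0).mulVecLin := by
  intro h
  have hlast : Pi.single (Fin.last n) 1 ∈ LinearMap.ker (snocCol N 0).mulVecLin := by
    rw [LinearMap.mem_ker, mulVecLin_apply, snocCol_mulVec_single_last]
  rw [← h, LinearMap.mem_ker, mulVecLin_apply, snocCol_mulVec_single_last] at hlast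
  exact hv hlast

theorem notMem_range_mulVecLin_of_vecMul_eq_zero {l : Type*} [Fintype l] [Fintype m]
    {M : Matrix m l R} {w x : m → R} (hw : w ᵥ* M = 0) (hx : w ⬝ᵥ x ≠ 0) :
    x ∉ LinearMap.range M.mulVecLin := by
  rintro ⟨y, rfl⟩
  exact hx (by rw [mulVecLin_apply, dotProduct_mulVec, hw, zero_dotProduct])

end CommSemiring

section Field

variable {k : Type*} [Field k] [Fintype m]

theorem rank_snocCol_of_notMem {M : Matrix m (Fin n) k} {v : m → k}
    (hv : v ∉ LinearMap.range M.mulVecLin) : (snocCol M v).rank = M.rank + 1 := by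
  rw [rank, range_snocCol_mulVecLin, Submodule.finrank_sup_span_singleton hv, rank]

theorem rank_snocCol_one (v : Fin n → k) :
    (snocCol (1 : Matrix (Fin n) (Fin n) k) v).rank = n := by
  rw [rank, range_snocCol_mulVecLin, mulVecLin_one, LinearMap.range_id, top_sup_eq, finrank_top,
    Module.finrank_fin_fun]

theorem rank_mul_of_disjoint_range_ker {l : Type*} [Fintype l] {B : Matrix l m k}
    {A : Matrix m (Fin n) k}
    (h : Disjoint (LinearMap.range A.mulVecLin) (LinearMap.ker B.mulVecLin)) :
    (B * A).rank = A.rank := by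
  rw [rank, rank, mulVecLin_mul, LinearMap.range_comp, ← LinearMap.range_domRestrict]
  exact LinearMap.finrank_range_of_inj (LinearMap.injective_domRestrict_iff.mpr h)

end Field

section CrossProduct

variable [CommRing R]

def crossMatrix (e : Fin 3 → R) : Matrix (Fin 3) (Fin 3) R :=
  LinearMap.toMatrix' (crossProduct e)

theorem crossMatrix_mulVec (e u : Fin 3 → R) : crossMatrix e *ᵥ u = e ⨯₃ u :=
  LinearMap.toMatrix'_mulVec _ _

theorem mulVecLin_crossMatrix (e : Fin 3 → R) : (crossMatrix e).mulVecLin = crossProduct e :=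
  LinearMap.ext (crossMatrix_mulVec e)

theorem vecMul_crossMatrix_self (e : Fin 3 → R) : e ᵥ* crossMatrix e = 0 :=
  dotProduct_eq_zero _ fun u => by rw [← dotProduct_mulVec, crossMatrix_mulVec, dot_self_cross]

theorem snocCol_crossMatrix_mul_mulVec_dotProduct_eq_zero {A : Matrix (Fin 3) (Fin 3) R}
    {v : Fin 3 → R} (hvA : v ᵥ* A = 0) (e : Fin 3 → R) (ξ : Fin 4 → R) :
    (snocCol (crossMatrix e * A) v *ᵥ ξ) ⬝ᵥ (A *ᵥ (snocCol 1 0 *ᵥ ξ)) = 0 := by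
  rw [snocCol_mulVec, snocCol_mulVec, smul_zero, add_zero, one_mulVec, ← mulVec_mulVec,
    crossMatrix_mulVec, add_dotProduct, smul_dotProduct, dotProduct_mulVec v, hvA,
    zero_dotProduct, smul_zero, add_zero, dotProduct_comm, dot_cross_self]

end CrossProduct

end Matrix

/-- Every rank-2 matrix arises as the fundamental matrix of a pair of
cameras with distinct centers. -/
theorem rank_two_is_fundamental_matrix {k : Type*} [Field k]
    (A : Matrix (Fin 3) (Fin 3) k) (hA : A.rank = 2) :
    ∃ P₁ P₂ : Matrix (Fin 3) (Fin 4) k,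
      P₁.rank = 3 ∧ P₂.rank = 3 ∧
      LinearMap.ker P₁.mulVecLin ≠ LinearMap.ker P₂.mulVecLin ∧
      ∀ ξ : Fin 4 → k, (P₁ *ᵥ ξ) ⬝ᵥ (A *ᵥ (P₂ *ᵥ ξ)) = 0 := by
  have hdet : A.det = 0 := by
    by_contra h
    simpa [hA] using rank_of_det_ne_zero h
  obtain ⟨v, hv, hvA⟩ := exists_vecMul_eq_zero_iff.mpr hdet
  obtain ⟨e, hve⟩ : ∃ e, v ⬝ᵥ e ≠ 0 := by
    by_contra! h
    exact hv (dotProduct_eq_zero v h)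
  have he : e ∉ LinearMap.range A.mulVecLin := notMem_range_mulVecLin_of_vecMul_eq_zero hvA hve
  have hrank : (crossMatrix e * A).rank = 2 := by
    rw [← hA]
    apply rank_mul_of_disjoint_range_ker
    rw [mulVecLin_crossMatrix]
    exact disjoint_ker_crossProduct he
  have hv' : v ∉ LinearMap.range (crossMatrix e * A).mulVecLin := by
    refine notMem_range_mulVecLin_of_vecMul_eq_zero ?_ (dotProduct_comm v e ▸ hve)
    rw [← vecMul_vecMul, vecMul_crossMatrix_self, zero_vecMul]
  refine ⟨snocCol (crossMatrix e * A) v, snocCol 1 0, ?_, rank_snocCol_one 0,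
    ker_snocCol_mulVecLin_ne hv, snocCol_crossMatrix_mul_mulVec_dotProduct_eq_zero hvA e⟩
  rw [rank_snocCol_of_notMem hv', hrank]
end

section
/- Let k be a field, let a, b, c, λ ∈ k, let v = (a, b, c, 1) ∈ k⁴, and let M be the 4×4 matrix λ·D + v·vᵀ, where D is the diagonal matrix diag(1,1,1,0) and v·vᵀ denotes the outer product (so M has entries M₀₀ = a²+λ, M₀₁ = ab, M₀₃ = a, M₃₃ = 1, etc.). Then the rank of M is never equal to 3; more precisely, M has rank 4 when λ ≠ 0 and rank 1 when λ = 0. -/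
/-! The shear `P = 1 - (v - eᵢ₀) eᵢ₀ᵀ` sends `v` (with `vᵢ₀ = 1`) to `eᵢ₀` and fixes every diagonal
matrix `D` vanishing at `i₀`, so `P (D + v vᵀ) Pᵀ = D + eᵢ₀ eᵢ₀ᵀ` is diagonal. Hence
`λ • diag(1,1,1,0) + v vᵀ` has the rank of `diag(λ,λ,λ,1)`, which is 4 or 1. -/

namespace Matrix

variable {ι R : Type*} [Fintype ι] [DecidableEq ι]

section CommRing

variable [CommRing R] (i₀ : ι) (v : ι → R)

def shearToSingle : Matrix ι ι R :=
  1 - vecMulVec (v - Pi.single i₀ 1) (Pi.single i₀ 1)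

variable {i₀ v}

theorem shearToSingle_mulVec (hv : v i₀ = 1) : shearToSingle i₀ v *ᵥ v = Pi.single i₀ 1 := by
  simp [shearToSingle, sub_mulVec, vecMulVec_mulVec, hv]

theorem shearToSingle_mul_diagonal {d : ι → R} (hd : d i₀ = 0) :
    shearToSingle i₀ v * diagonal d = diagonal d := by
  simp [shearToSingle, sub_mul, vecMulVec_mul, hd]

theorem isUnit_det_shearToSingle (hv : v i₀ = 1) : IsUnit (shearToSingle i₀ v).det := by
  refine isUnit_det_of_right_inverse (B := 1 + vecMulVec (v - Pi.single i₀ 1) (Pi.single i₀ 1)) ?_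
  simp [shearToSingle, sub_mul, mul_add, vecMulVec_mul_vecMulVec, hv]

omit [Fintype ι] in
theorem diagonal_add_vecMulVec_single {d : ι → R} (hd : d i₀ = 0) :
    diagonal d + vecMulVec (Pi.single i₀ 1) (Pi.single i₀ 1) =
      diagonal (Function.update d i₀ 1) := by
  ext i j
  simp only [add_apply, diagonal_apply, vecMulVec_apply, Pi.single_apply, Function.update_apply]
  split_ifs <;> simp_all

theorem shearToSingle_mul_mul_transpose {d : ι → R} (hd : d i₀ = 0) (hv : v i₀ = 1) :
    shearToSingle i₀ v * (diagonal d + vecMulVec v v) * (shearToSingle i₀ v)ᵀ =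
      diagonal (Function.update d i₀ 1) := by
  have hDP : diagonal d * (shearToSingle i₀ v)ᵀ = diagonal d := by
    rw [← diagonal_transpose d, ← transpose_mul, shearToSingle_mul_diagonal hd]
  rw [mul_add, add_mul, shearToSingle_mul_diagonal hd, hDP, mul_vecMulVec, vecMulVec_mul,
    vecMul_transpose, shearToSingle_mulVec hv, diagonal_add_vecMulVec_single hd]

end CommRing

theorem rank_diagonal_add_vecMulVec [Field R] {i₀ : ι} {v d : ι → R} (hd : d i₀ = 0)
    (hv : v i₀ = 1) : (diagonal d + vecMulVec v v).rank = (Function.support d).ncard + 1 := by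
  classical
  have hP := isUnit_det_shearToSingle hv
  have hPt : IsUnit (shearToSingle i₀ v)ᵀ.det := by rwa [det_transpose]
  rw [← rank_mul_eq_right_of_isUnit_det _ _ hP, ← rank_mul_eq_left_of_isUnit_det _ _ hPt,
    shearToSingle_mul_mul_transpose hd hv, rank_diagonal, Fintype.card_eq_nat_card]
  change Nat.card (Function.support _) = _
  rw [Nat.card_coe_set_eq, Function.support_update_of_ne_zero _ _ one_ne_zero,
    Set.ncard_insert_of_notMem (by simpa using hd)]

end Matrix

open Matrix in
/-- The pencil spanned by the smooth cone diag(1,1,1,0) and a doubled plane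
v·vᵀ (with v = (a,b,c,1), not through the vertex) contains no rank-3 matrix:
λ·D + v·vᵀ has rank 4 when λ ≠ 0 and rank 1 when λ = 0. -/
theorem pencil_cone_doubled_plane_rank {k : Type*} [Field k]
    (a b c lam : k)
    (v : Fin 4 → k) (hv : v = ![a, b, c, 1])
    (M : Matrix (Fin 4) (Fin 4) k)
    (hM : M = lam • Matrix.diagonal ![1, 1, 1, 0] + Matrix.vecMulVec v v) :
    M.rank ≠ 3 ∧ (lam ≠ 0 → M.rank = 4) ∧ (lam = 0 → M.rank = 1) := by
  have hrank : M.rank = (Function.support (lam • ![(1 : k), 1, 1, 0])).ncard + 1 := by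
    rw [hM, ← diagonal_smul]
    exact rank_diagonal_add_vecMulVec (i₀ := 3) (by simp) (by simp [hv])
  have h4 : lam ≠ 0 → M.rank = 4 := by
    intro h
    rw [hrank, Function.support_const_smul_of_ne_zero _ _ h]
    have hsupp : Function.support ![(1 : k), 1, 1, 0] = {0, 1, 2} := by
      ext i; fin_cases i <;> simp
    simp [hsupp]
  have h1 : lam = 0 → M.rank = 1 := by
    rintro rfl
    simp [hrank]
  refine ⟨fun h3 => ?_, h4, h1⟩
  by_cases h : lam = 0
  · rw [h1 h] at h3; omega
  · rw [h4 h] at h3; omega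
end

section
/- Let k be a field of characteristic different from 2, let M be a symmetric 4×4 matrix over k of rank 3, and let W be a 2-dimensional k-subspace of k⁴ such that x ⬝ᵥ (M *ᵥ x) = 0 for every x ∈ W. Then the kernel of the linear map k⁴ → k⁴ induced by M is contained in W. -/
open Matrix

/-- Every line on a quadric cone of rank 3 passes through the vertex:
if a rank-3 symmetric matrix M vanishes as a quadratic form on a
2-dimensional subspace W, then ker M ⊆ W. -/
theorem line_on_cone_through_vertex {k : Type*} [Field k] (hchar : (2 : k) ≠ 0)
    (M : Matrix (Fin 4) (Fin 4) k) (hsym : Mᵀ = M) (hrank : M.rank = 3)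
    (W : Submodule k (Fin 4 → k)) (hW : Module.finrank k W = 2)
    (hvan : ∀ x ∈ W, x ⬝ᵥ (M *ᵥ x) = 0) :
    LinearMap.ker M.mulVecLin ≤ W := by
  classical
  set B : LinearMap.BilinForm k (Fin 4 → k) := Matrix.toBilin' M with hB
  have hBapp : ∀ x y, B x y = x ⬝ᵥ (M *ᵥ y) := fun x y =>
    Matrix.toBilin'_apply' M x y
  -- symmetry of B
  have hBsymm : ∀ x y, B x y = B y x := by
    intro x y
    rw [hBapp, hBapp, Matrix.dotProduct_mulVec, ← Matrix.mulVec_transpose, hsym,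
      dotProduct_comm]
  have hrefl : B.IsRefl := fun x y h => by rw [← hBsymm]; exact h
  -- B vanishes on pairs from W (polarization)
  have hWpair : ∀ x ∈ W, ∀ y ∈ W, B x y = 0 := by
    intro x hx y hy
    have h0 : (x + y) ⬝ᵥ (M *ᵥ (x + y)) = 0 := hvan _ (W.add_mem hx hy)
    have hxx := hvan x hx
    have hyy := hvan y hy
    have hxy : x ⬝ᵥ (M *ᵥ y) = y ⬝ᵥ (M *ᵥ x) := by
      have := hBsymm x y
      rwa [hBapp, hBapp] at this
    rw [Matrix.mulVec_add, add_dotProduct, dotProduct_add,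
      dotProduct_add, hxx, hyy, hxy] at h0
    have h2 : (2 : k) * (y ⬝ᵥ (M *ᵥ x)) = 0 := by linear_combination h0
    have := mul_eq_zero.mp h2
    rcases this with h | h
    · exact absurd h hchar
    · rw [hBapp, hxy, h]
  -- kernel equals the radical of B
  have hker : LinearMap.ker M.mulVecLin = B.orthogonal ⊤ := by
    ext y
    constructor
    · intro hy
      rw [LinearMap.BilinForm.mem_orthogonal_iff]
      intro x _
      have hy' : M *ᵥ y = 0 := hy
      show B x y = 0
      rw [hBapp, hy', dotProduct_zero]
    · intro hy
      have : ∀ x, x ⬝ᵥ (M *ᵥ y) = 0 := by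
        intro x
        have h' : B x y = 0 := (LinearMap.BilinForm.mem_orthogonal_iff.mp hy) x trivial
        rwa [hBapp] at h'
      show M *ᵥ y = 0
      ext i
      have := this (Pi.single i 1)
      rwa [single_dotProduct, one_mul] at this
  -- finrank of the kernel is 1
  have hkerrank : Module.finrank k (LinearMap.ker M.mulVecLin) = 1 := by
    have := LinearMap.finrank_range_add_finrank_ker M.mulVecLin
    rw [Matrix.rank] at hrank
    simp only [Module.finrank_fintype_fun_eq_card, Fintype.card_fin] at this
    omega
  -- proceed by contradiction
  by_contra hcon
  set K := LinearMap.ker M.mulVecLin with hK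
  set U := W ⊔ K with hU
  have hWK : W ⊓ K = ⊥ := by
    by_contra hne
    have hle : W ⊓ K ≤ K := inf_le_right
    have h1 : Module.finrank k ↥(W ⊓ K) ≤ 1 := hkerrank ▸ Submodule.finrank_mono hle
    have hpos : 0 < Module.finrank k ↥(W ⊓ K) := by
      have : Module.finrank k ↥(W ⊓ K) ≠ 0 := by
        intro h0
        exact hne (Submodule.finrank_eq_zero.mp h0)
      omega
    have heq : Module.finrank k ↥(W ⊓ K) = Module.finrank k K := by omega
    have : W ⊓ K = K := Submodule.eq_of_le_of_finrank_eq hle heq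
    exact hcon (le_trans (this ▸ inf_le_left) le_rfl)
  have hUrank : Module.finrank k U = 3 := by
    have := Submodule.finrank_sup_add_finrank_inf_eq W K
    rw [hWK, ← hU] at this
    simp only [finrank_bot] at this
    omega
  -- B vanishes on U
  have hUiso : U ≤ B.orthogonal U := by
    intro y hy
    rw [LinearMap.BilinForm.mem_orthogonal_iff]
    intro x hx
    rcases Submodule.mem_sup.mp hx with ⟨w, hw, v, hv, rfl⟩
    rcases Submodule.mem_sup.mp hy with ⟨w', hw', v', hv', rfl⟩
    show B (w + v) (w' + v') = 0
    have hv0 : M *ᵥ v' = 0 := hv'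
    have h1 : B (w + v) v' = 0 := by rw [hBapp, hv0, dotProduct_zero]
    have h2 : B (w + v) w' = 0 := by
      rw [map_add, LinearMap.add_apply]
      have hvw : B v w' = 0 := by
        rw [hBsymm, hBapp]
        have : M *ᵥ v = 0 := hv
        rw [this, dotProduct_zero]
      rw [hWpair w hw w' hw', hvw, add_zero]
    rw [map_add, h1, h2, zero_add]
  -- dimension count contradiction
  have hKU : K ≤ U := le_sup_right
  have hradU : U ⊓ B.orthogonal ⊤ = K := by
    rw [← hker]
    exact inf_eq_right.mpr hKU
  have hdim := LinearMap.BilinForm.finrank_add_finrank_orthogonal hrefl U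
  rw [hradU, hUrank, hkerrank] at hdim
  simp only [Module.finrank_fintype_fun_eq_card, Fintype.card_fin] at hdim
  have h3 : Module.finrank k ↥(B.orthogonal U) = 2 := by omega
  have := Submodule.finrank_mono hUiso
  omega
end

section
/- Let k be a field of characteristic different from 2, and let M₁, M₂ be symmetric 4×4 matrices over k, each of rank 3, whose kernels in k⁴ are distinct subspaces. Suppose W₁ and W₂ are 2-dimensional k-subspaces of k⁴ such that x ⬝ᵥ (Mᵢ *ᵥ x) = 0 for every x ∈ Wⱼ and all i, j ∈ {1, 2}. Then W₁ = W₂. -/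
set_option synthInstance.maxHeartbeats 1000000
set_option maxHeartbeats 1600000

open Matrix

namespace ConesAux

variable {k : Type*} [Field k]

/-- The dot-product pairing as a map into the dual. -/
private def dotPair : (Fin 4 → k) →ₗ[k] Module.Dual k (Fin 4 → k) :=
  LinearMap.mk₂ k (fun x y => x ⬝ᵥ y) add_dotProduct smul_dotProduct
    dotProduct_add dotProduct_smul

private lemma dotPair_apply (x y : Fin 4 → k) : dotPair x y = x ⬝ᵥ y := rfl

private lemma dotPair_injective : Function.Injective (dotPair (k := k)) := by
  rw [injective_iff_map_eq_zero]
  intro x hx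
  funext i
  have := congrArg (fun φ => φ (Pi.single i 1)) hx
  simpa [dotPair_apply, dotProduct_single] using this

private lemma finrank_dualAnn (W : Submodule k (Fin 4 → k)) :
    Module.finrank k W + Module.finrank k W.dualAnnihilator = 4 := by
  have e : Module.finrank k (Module.Dual k ((Fin 4 → k) ⧸ W))
      = Module.finrank k W.dualAnnihilator :=
    (Submodule.dualQuotEquivDualAnnihilator W).finrank_eq
  rw [← e, Subspace.dual_finrank_eq, add_comm, Submodule.finrank_quotient_add_finrank]
  simp [Module.finrank_pi]

/-- Key dimension count: a totally isotropic subspace `U` containing the kernel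
satisfies `2 dim U ≤ 4 + dim ker`. -/
private lemma key (M : Matrix (Fin 4) (Fin 4) k) (U : Submodule k (Fin 4 → k))
    (hKU : LinearMap.ker M.mulVecLin ≤ U)
    (hiso : ∀ x ∈ U, ∀ y ∈ U, x ⬝ᵥ (M *ᵥ y) = 0) :
    Module.finrank k U + Module.finrank k U
      ≤ 4 + Module.finrank k (LinearMap.ker M.mulVecLin) := by
  set K := LinearMap.ker M.mulVecLin with hK
  set f : U →ₗ[k] Module.Dual k (Fin 4 → k) :=
    dotPair.comp (M.mulVecLin.comp U.subtype) with hf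
  have hrange : LinearMap.range f ≤ U.dualAnnihilator := by
    rintro _ ⟨u, rfl⟩
    rw [Submodule.mem_dualAnnihilator]
    intro w hw
    have hc : (M *ᵥ (u : Fin 4 → k)) ⬝ᵥ w = w ⬝ᵥ (M *ᵥ (u : Fin 4 → k)) := dotProduct_comm _ _
    simp only [hf, LinearMap.comp_apply, dotPair_apply, Matrix.mulVecLin_apply,
      Submodule.coe_subtype]
    rw [hc]
    exact hiso w hw u u.2
  have hker : LinearMap.ker f = Submodule.comap U.subtype K := by
    ext u
    constructor
    · intro hu
      have h1 : dotPair (M *ᵥ (u : Fin 4 → k)) = 0 := hu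
      have h0 : M *ᵥ (u : Fin 4 → k) = 0 := by
        apply dotPair_injective
        simpa using h1
      simpa [hK, Submodule.mem_comap, LinearMap.mem_ker] using h0
    · intro hu
      have h0 : M *ᵥ (u : Fin 4 → k) = 0 := hu
      show dotPair (M *ᵥ (u : Fin 4 → k)) = 0
      rw [h0]; simp [map_zero]
  have hkerrank : Module.finrank k (LinearMap.ker f) = Module.finrank k K := by
    rw [hker]
    exact (Submodule.comapSubtypeEquivOfLe hKU).finrank_eq
  have hrn := LinearMap.finrank_range_add_finrank_ker f
  have h1 : Module.finrank k (LinearMap.range f) ≤ Module.finrank k U.dualAnnihilator :=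
    Submodule.finrank_mono hrange
  have h2 := finrank_dualAnn U
  omega

private lemma symm_dot (M : Matrix (Fin 4) (Fin 4) k) (hsym : Mᵀ = M) (x y : Fin 4 → k) :
    y ⬝ᵥ (M *ᵥ x) = x ⬝ᵥ (M *ᵥ y) := by
  rw [dotProduct_mulVec, ← Matrix.mulVec_transpose, hsym, dotProduct_comm]

private lemma polarize (M : Matrix (Fin 4) (Fin 4) k) (hsym : Mᵀ = M) (hchar : (2 : k) ≠ 0)
    (W : Submodule k (Fin 4 → k)) (hQ : ∀ x ∈ W, x ⬝ᵥ (M *ᵥ x) = 0) :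
    ∀ x ∈ W, ∀ y ∈ W, x ⬝ᵥ (M *ᵥ y) = 0 := by
  intro x hx y hy
  have h := hQ (x + y) (W.add_mem hx hy)
  rw [mulVec_add, dotProduct_add, add_dotProduct, add_dotProduct, hQ x hx, hQ y hy,
    symm_dot M hsym x y] at h
  have h2 : (2 : k) * (x ⬝ᵥ (M *ᵥ y)) = 0 := by linear_combination h
  exact (mul_eq_zero.mp h2).resolve_left hchar

private lemma finrank_ker (M : Matrix (Fin 4) (Fin 4) k) (hrank : M.rank = 3) :
    Module.finrank k (LinearMap.ker M.mulVecLin) = 1 := by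
  have h := LinearMap.finrank_range_add_finrank_ker M.mulVecLin
  have hr : M.rank = Module.finrank k (LinearMap.range M.mulVecLin) := rfl
  simp at h
  omega

/-- The kernel of a rank-3 symmetric matrix is contained in any 2-dimensional
totally isotropic subspace. -/
private lemma ker_le (M : Matrix (Fin 4) (Fin 4) k) (hsym : Mᵀ = M) (hrank : M.rank = 3)
    (W : Submodule k (Fin 4 → k)) (hW : Module.finrank k W = 2)
    (hbil : ∀ x ∈ W, ∀ y ∈ W, x ⬝ᵥ (M *ᵥ y) = 0) :
    LinearMap.ker M.mulVecLin ≤ W := by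
  by_contra h
  set K := LinearMap.ker M.mulVecLin with hK
  have hKrank : Module.finrank k K = 1 := finrank_ker M hrank
  have hinf : W ⊓ K < K := by
    refine lt_of_le_of_ne inf_le_right ?_
    intro he
    exact h (inf_eq_right.mp he)
  have hinf0 : Module.finrank k (W ⊓ K : Submodule k (Fin 4 → k)) = 0 := by
    have := Submodule.finrank_lt_finrank_of_lt hinf
    omega
  have hU : Module.finrank k (W ⊔ K : Submodule k (Fin 4 → k)) = 3 := by
    have := Submodule.finrank_sup_add_finrank_inf_eq W K
    omega
  have hisoU : ∀ x ∈ W ⊔ K, ∀ y ∈ W ⊔ K, x ⬝ᵥ (M *ᵥ y) = 0 := by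
    intro x hx y hy
    obtain ⟨w, hw, v, hv, rfl⟩ := Submodule.mem_sup.mp hx
    obtain ⟨w', hw', v', hv', rfl⟩ := Submodule.mem_sup.mp hy
    have hv0 : M *ᵥ v = 0 := hv
    have hv'0 : M *ᵥ v' = 0 := hv'
    rw [mulVec_add, hv'0, add_zero, add_dotProduct, hbil w hw w' hw',
      symm_dot M hsym w' v, hv0]
    simp
  have hle : K ≤ W ⊔ K := le_sup_right
  have hkey := key M (W ⊔ K) hle hisoU
  rw [← hK] at hkey
  omega

end ConesAux

/-- The intersection of two quadric cones with distinct vertices contains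
at most one line: two 2-dimensional isotropic subspaces common to both
cones must coincide. -/
theorem cones_distinct_vertices_at_most_one_line {k : Type*} [Field k]
    (hchar : (2 : k) ≠ 0)
    (M₁ M₂ : Matrix (Fin 4) (Fin 4) k)
    (hsym₁ : M₁ᵀ = M₁) (hsym₂ : M₂ᵀ = M₂)
    (hrank₁ : M₁.rank = 3) (hrank₂ : M₂.rank = 3)
    (hker : LinearMap.ker M₁.mulVecLin ≠ LinearMap.ker M₂.mulVecLin)
    (W₁ W₂ : Submodule k (Fin 4 → k))
    (hW₁ : Module.finrank k W₁ = 2) (hW₂ : Module.finrank k W₂ = 2)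
    (hvan : ∀ i : Fin 2, ∀ j : Fin 2, ∀ x ∈ (![W₁, W₂] j),
      x ⬝ᵥ ((![M₁, M₂] i) *ᵥ x) = 0) :
    W₁ = W₂ := by
  have hQ11 : ∀ x ∈ W₁, x ⬝ᵥ (M₁ *ᵥ x) = 0 := by simpa using hvan 0 0
  have hQ12 : ∀ x ∈ W₂, x ⬝ᵥ (M₁ *ᵥ x) = 0 := by simpa using hvan 0 1
  have hQ21 : ∀ x ∈ W₁, x ⬝ᵥ (M₂ *ᵥ x) = 0 := by simpa using hvan 1 0
  have hQ22 : ∀ x ∈ W₂, x ⬝ᵥ (M₂ *ᵥ x) = 0 := by simpa using hvan 1 1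
  have h11 := ConesAux.ker_le M₁ hsym₁ hrank₁ W₁ hW₁
    (ConesAux.polarize M₁ hsym₁ hchar W₁ hQ11)
  have h12 := ConesAux.ker_le M₁ hsym₁ hrank₁ W₂ hW₂
    (ConesAux.polarize M₁ hsym₁ hchar W₂ hQ12)
  have h21 := ConesAux.ker_le M₂ hsym₂ hrank₂ W₁ hW₁
    (ConesAux.polarize M₂ hsym₂ hchar W₁ hQ21)
  have h22 := ConesAux.ker_le M₂ hsym₂ hrank₂ W₂ hW₂
    (ConesAux.polarize M₂ hsym₂ hchar W₂ hQ22)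
  set K₁ := LinearMap.ker M₁.mulVecLin
  set K₂ := LinearMap.ker M₂.mulVecLin
  have hK₁ : Module.finrank k K₁ = 1 := ConesAux.finrank_ker M₁ hrank₁
  have hK₂ : Module.finrank k K₂ = 1 := ConesAux.finrank_ker M₂ hrank₂
  have hinf : K₁ ⊓ K₂ < K₁ := by
    refine lt_of_le_of_ne inf_le_left ?_
    intro he
    exact hker (Submodule.eq_of_le_of_finrank_eq (inf_eq_left.mp he) (by rw [hK₁, hK₂]))
  have hinf0 : Module.finrank k (K₁ ⊓ K₂ : Submodule k (Fin 4 → k)) = 0 := by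
    have := Submodule.finrank_lt_finrank_of_lt hinf
    omega
  have hsup : Module.finrank k (K₁ ⊔ K₂ : Submodule k (Fin 4 → k)) = 2 := by
    have := Submodule.finrank_sup_add_finrank_inf_eq K₁ K₂
    omega
  have e1 : K₁ ⊔ K₂ = W₁ :=
    Submodule.eq_of_le_of_finrank_eq (sup_le h11 h21) (by rw [hsup, hW₁])
  have e2 : K₁ ⊔ K₂ = W₂ :=
    Submodule.eq_of_le_of_finrank_eq (sup_le h12 h22) (by rw [hsup, hW₂])
  rw [← e1, e2]
end

section
/- Let k be a field and let P₁, P₂ be 3×4 matrices over k, each of rank 3, whose kernels in k⁴ are distinct subspaces. If g is a 4×4 matrix over k satisfying P₁ * g = P₁ and P₂ * g = P₂, then g is the identity matrix. -/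
open Matrix

lemma ker_finrank_one {k : Type*} [Field k] (P : Matrix (Fin 3) (Fin 4) k)
    (hP : P.rank = 3) :
    Module.finrank k (LinearMap.ker P.mulVecLin) = 1 := by
  have h := LinearMap.finrank_range_add_finrank_ker P.mulVecLin
  rw [Module.finrank_pi] at h
  have h3 : Module.finrank k (LinearMap.range P.mulVecLin) = 3 := hP
  rw [h3, Fintype.card_fin] at h
  omega

/-- A configuration of two cameras with distinct centers has trivial
stabilizer under the right GL₄-action. -/
theorem two_cameras_trivial_stabilizer {k : Type*} [Field k]
    (P₁ P₂ : Matrix (Fin 3) (Fin 4) k)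
    (hP₁ : P₁.rank = 3) (hP₂ : P₂.rank = 3)
    (hker : LinearMap.ker P₁.mulVecLin ≠ LinearMap.ker P₂.mulVecLin)
    (g : Matrix (Fin 4) (Fin 4) k)
    (h₁ : P₁ * g = P₁) (h₂ : P₂ * g = P₂) :
    g = 1 := by
  set K₁ := LinearMap.ker P₁.mulVecLin
  set K₂ := LinearMap.ker P₂.mulVecLin
  have hd₁ : Module.finrank k K₁ = 1 := ker_finrank_one P₁ hP₁
  have hd₂ : Module.finrank k K₂ = 1 := ker_finrank_one P₂ hP₂
  -- intersection is trivial
  have hinf : K₁ ⊓ K₂ = ⊥ := by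
    by_contra hne
    have hle : Module.finrank k ↥(K₁ ⊓ K₂) ≤ 1 :=
      hd₁ ▸ Submodule.finrank_mono inf_le_left
    have hpos : 0 < Module.finrank k ↥(K₁ ⊓ K₂) := by
      rw [Module.finrank_pos_iff]
      exact Submodule.nontrivial_iff_ne_bot.mpr hne
    have heq : Module.finrank k ↥(K₁ ⊓ K₂) = 1 := le_antisymm hle hpos
    have e₁ : K₁ ⊓ K₂ = K₁ :=
      Submodule.eq_of_le_of_finrank_eq inf_le_left (heq.trans hd₁.symm)
    have e₂ : K₁ ⊓ K₂ = K₂ :=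
      Submodule.eq_of_le_of_finrank_eq inf_le_right (heq.trans hd₂.symm)
    exact hker (e₁ ▸ e₂)
  -- (g - 1) maps everything into both kernels
  have key : ∀ v : Fin 4 → k, (g - 1).mulVec v = 0 := by
    intro v
    have m₁ : (g - 1).mulVec v ∈ K₁ := by
      have : P₁.mulVec ((g - 1).mulVec v) = 0 := by
        rw [mulVec_mulVec]
        have : P₁ * (g - 1) = 0 := by rw [Matrix.mul_sub, h₁, Matrix.mul_one, sub_self]
        rw [this, zero_mulVec]
      simpa [K₁, Matrix.mulVecLin_apply] using this
    have m₂ : (g - 1).mulVec v ∈ K₂ := by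
      have : P₂.mulVec ((g - 1).mulVec v) = 0 := by
        rw [mulVec_mulVec]
        have : P₂ * (g - 1) = 0 := by rw [Matrix.mul_sub, h₂, Matrix.mul_one, sub_self]
        rw [this, zero_mulVec]
      simpa [K₂, Matrix.mulVecLin_apply] using this
    have : (g - 1).mulVec v ∈ K₁ ⊓ K₂ := ⟨m₁, m₂⟩
    simpa [hinf] using this
  have hg : g - 1 = 0 := by
    ext i j
    have := congr_fun (key (Pi.single j 1)) i
    simpa [Matrix.mulVec_single_one] using
      congr_fun (key (Pi.single j 1)) i
  exact sub_eq_zero.mp hg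
end
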